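/- arXiv:1003.3478 — 10 statements merged into one kernel-verified Lean document; each statement's English description precedes it below -/
import Mathlib

section
/- Let q(s) ∈ K[s] and let I be a left ideal of R with I ∩ K[s] ≠ 0. Then (I + R·q(s)) ∩ K[s] = (I ∩ K[s]) + K[s]·q(s), i.e. the preimage in K[s] of the left ideal generated by I and q(s) equals the ideal of K[s] generated by I ∩ K[s] and q(s). -/
open Polynomial

/-- Let `K` be a field, `R` an associative unital `K`-algebra and
`ι : K[s] → R` a `K`-algebra homomorphism whose image lies in the center of `R`.
For `q(s) ∈ K[s]` and a left ideal `I` of `R` with `I ∩ K[s] ≠ 0`, one has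
`(I + R·q(s)) ∩ K[s] = (I ∩ K[s]) + K[s]·q(s)`. -/
theorem checkRoot_sum_intersection
    {K : Type*} [Field K] {R : Type*} [Ring R] [Algebra K R]
    (ι : K[X] →ₐ[K] R) (hι : ∀ (p : K[X]) (r : R), ι p * r = r * ι p)
    (q : K[X]) (I : Ideal R) (hI : Ideal.comap ι I ≠ ⊥) :
    Ideal.comap ι (I ⊔ Ideal.span {ι q}) =
      Ideal.comap ι I ⊔ Ideal.span {q} := by
  classical
  obtain ⟨f, hf⟩ := (IsPrincipalIdealRing.principal (Ideal.comap ι I)).principal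
  have hf0 : f ≠ 0 := by
    rintro rfl
    simp [hf, Ideal.span_singleton_eq_bot.mpr] at hI
  have hfI : ι f ∈ I := by
    have : f ∈ Ideal.comap ι I := by rw [hf]; exact Ideal.subset_span rfl
    exact this
  set d := gcd f q with hd
  obtain ⟨f', hff'⟩ : d ∣ f := gcd_dvd_left f q
  obtain ⟨q', hqq'⟩ : d ∣ q := gcd_dvd_right f q
  have hf'0 : f' ≠ 0 := by
    rintro rfl
    exact hf0 (by simp [hff'])
  have hRHS : Ideal.comap ι I ⊔ Ideal.span {q} = Ideal.span {d} := by
    rw [hf, hd, show Submodule.span K[X] {f} = Ideal.span {f} from rfl, span_gcd, Ideal.span_insert]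
  apply le_antisymm
  · intro p hp
    rw [Ideal.mem_comap, Submodule.mem_sup] at hp
    obtain ⟨a, haI, b, hb, hab⟩ := hp
    obtain ⟨r, hr⟩ := Submodule.mem_span_singleton.mp hb
    have key : ι (f' * p) ∈ I := by
      have : ι (f' * p) = ι f' * a + (r * ι q') * ι f := by
        rw [map_mul, ← hab, ← hr, smul_eq_mul, mul_add]
        congr 1
        rw [← mul_assoc, hι f' r, mul_assoc, ← map_mul]
        have h1 : f' * q = q' * f := by
          rw [hff', hqq']; ring
        rw [h1, map_mul, ← mul_assoc]
      rw [this]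
      exact Ideal.add_mem _ (Ideal.mul_mem_left _ _ haI) (Ideal.mul_mem_left _ _ hfI)
    have : f' * p ∈ Ideal.span {d * f'} := by
      rw [← hff', show Ideal.span {f} = Submodule.span K[X] {f} from rfl, ← hf]; exact key
    obtain ⟨c, hc⟩ := Ideal.mem_span_singleton.mp this
    have hdp : d ∣ p := by
      refine ⟨c, mul_left_cancel₀ hf'0 ?_⟩
      rw [hc]; ring
    rw [hRHS]
    exact Ideal.mem_span_singleton.mpr hdp
  · rw [hRHS, Ideal.span_le, Set.singleton_subset_iff, SetLike.mem_coe,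
      Ideal.mem_comap, hd]
    obtain ⟨u, v, huv⟩ := exists_gcd_eq_mul_add_mul f q
    rw [huv, map_add, map_mul, map_mul]
    exact Submodule.add_mem _
      (Submodule.mem_sup_left (by rw [hι]; exact Ideal.mul_mem_left _ _ hfI))
      (Submodule.mem_sup_right (by
        rw [hι]; exact Ideal.mul_mem_left _ _ (Ideal.subset_span rfl)))
end

section
/- Let q(s) ∈ K[s], let I be a left ideal of R, and let b(s) ∈ K[s] be a nonzero polynomial generating the ideal I ∩ K[s] of K[s]. Then (I + R·q(s)) ∩ K[s] is the principal ideal of K[s] generated by gcd(b(s), q(s)). -/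
open Polynomial

open scoped Classical

/-- Let `K` be a field, `R` an associative unital `K`-algebra and
`ι : K[s] → R` a `K`-algebra homomorphism whose image lies in the center of `R`.
Let `q(s) ∈ K[s]`, let `I` be a left ideal of `R` and let `b(s) ≠ 0` generate
`I ∩ K[s]`. Then `(I + R·q(s)) ∩ K[s] = ⟨gcd(b(s), q(s))⟩`. -/
theorem checkRoot_sum_intersection_gcd
    {K : Type*} [Field K] {R : Type*} [Ring R] [Algebra K R]
    (ι : K[X] →ₐ[K] R) (hι : ∀ (p : K[X]) (r : R), ι p * r = r * ι p)
    (q : K[X]) (I : Ideal R) (b : K[X]) (hb : b ≠ 0)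
    (hbgen : Ideal.comap ι I = Ideal.span {b}) :
    Ideal.comap ι (I ⊔ Ideal.span {ι q}) =
      Ideal.span {EuclideanDomain.gcd b q} := by
  set d := EuclideanDomain.gcd b q with hd
  obtain ⟨b', hb'⟩ : d ∣ b := EuclideanDomain.gcd_dvd_left b q
  obtain ⟨q', hq'⟩ : d ∣ q := EuclideanDomain.gcd_dvd_right b q
  have hbI : ι b ∈ I := by
    have : b ∈ Ideal.comap ι I := hbgen ▸ Ideal.mem_span_singleton_self b
    exact this
  have hb'ne : b' ≠ 0 := by
    rintro rfl; exact hb (by simp [hb'])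
  apply le_antisymm
  · -- comap ≤ span d
    intro p hp
    have hp' : ι p ∈ I ⊔ Ideal.span {ι q} := hp
    rw [Submodule.mem_sup] at hp'
    obtain ⟨i, hi, z, hz, hiz⟩ := hp'
    obtain ⟨r, hr⟩ := Submodule.mem_span_singleton.mp hz
    -- show ι (p * b') ∈ I
    have key : ι (p * b') ∈ I := by
      have hqb' : q * b' = q' * b := by
        rw [hq', hb']; ring
      have : ι (p * b') = ι b' * i + (r * ι q') * ι b := by
        rw [map_mul, ← hiz, ← hr]
        have : ι q * ι b' = ι q' * ι b := by
          rw [← map_mul, ← map_mul, hqb']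
        rw [add_mul, hι b' i]
        simp only [smul_eq_mul]
        rw [mul_assoc, this, mul_assoc]
      rw [this]
      exact I.add_mem (by simpa [hι b' i] using I.smul_mem (ι b') hi)
        (I.smul_mem (r * ι q') hbI)
    have hmem : p * b' ∈ Ideal.span {b} := hbgen ▸ key
    have hdvd : b ∣ p * b' := Ideal.mem_span_singleton.mp hmem
    rw [hb'] at hdvd
    exact Ideal.mem_span_singleton.mpr ((mul_dvd_mul_iff_right hb'ne).mp hdvd)
  · -- span d ≤ comap
    rw [Ideal.span_le]
    rintro x rfl
    show ι d ∈ I ⊔ Ideal.span {ι q}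
    have hbez : d = b * EuclideanDomain.gcdA b q + q * EuclideanDomain.gcdB b q :=
      EuclideanDomain.gcd_eq_gcd_ab b q
    rw [hbez, map_add, map_mul, map_mul]
    refine Submodule.add_mem_sup ?_ ?_
    · rw [hι b (ι (EuclideanDomain.gcdA b q))]
      exact I.smul_mem _ hbI
    · rw [hι q (ι (EuclideanDomain.gcdB b q))]
      exact Submodule.smul_mem _ _ (Submodule.mem_span_singleton_self _)
end

section
/- Let α ∈ K, let I be a left ideal of R, and let b(s) ∈ K[s] be a nonzero polynomial generating I ∩ K[s]. Then −α is a root of b (i.e. b(−α) = 0) if and only if the left ideal I + R·(s+α) is a proper left ideal of R (i.e. I + R·(s+α) ≠ R). -/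
open Polynomial

/-- Let `K` be a field, `R` an associative unital `K`-algebra and
`ι : K[s] → R` a `K`-algebra homomorphism whose image lies in the center of `R`.
Let `α ∈ K`, let `I` be a left ideal of `R` and let `b(s) ≠ 0` generate `I ∩ K[s]`.
Then `b(−α) = 0` if and only if `I + R·(s+α)` is a proper left ideal of `R`. -/
theorem checkRoot_root_iff_proper
    {K : Type*} [Field K] {R : Type*} [Ring R] [Algebra K R]
    (ι : K[X] →ₐ[K] R) (hι : ∀ (p : K[X]) (r : R), ι p * r = r * ι p)
    (α : K) (I : Ideal R) (b : K[X]) (hb : b ≠ 0)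
    (hbgen : Ideal.comap ι I = Ideal.span {b}) :
    b.eval (-α) = 0 ↔ I ⊔ Ideal.span {ι (X + C α)} ≠ ⊤ := by
  have hXC : X + C α = X - C (-α) := by rw [map_neg, sub_neg_eq_add]
  have hbI : ι b ∈ I := by
    have : b ∈ Ideal.comap ι I := by
      rw [hbgen]; exact Ideal.subset_span rfl
    exact this
  constructor
  · intro hroot htop
    -- b(-α)=0 means (X + C α) ∣ b
    have hdvd : (X + C α) ∣ b := by
      rw [hXC]; exact (dvd_iff_isRoot).mpr hroot
    obtain ⟨c, hc⟩ := hdvd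
    have hc0 : c ≠ 0 := by rintro rfl; simp at hc; exact hb hc
    have h1 : (1 : R) ∈ I ⊔ Ideal.span {ι (X + C α)} := by
      rw [htop]; trivial
    obtain ⟨i, hi, z, hz, hiz⟩ := Submodule.mem_sup.mp h1
    obtain ⟨r, hr⟩ := Submodule.mem_span_singleton.mp hz
    -- ι c = ι c * 1 = ι c * i + ι c * (r * ι (X+Cα))
    have hcI : ι c ∈ I := by
      have key : ι c = ι c * i + r * ι b := by
        have : ι c * z = r * ι b := by
          rw [← hr]
          simp only [smul_eq_mul]
          rw [← mul_assoc, hι c r, mul_assoc, ← map_mul, hc, mul_comm (X + C α) c]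
        calc ι c = ι c * (i + z) := by rw [hiz, mul_one]
        _ = ι c * i + ι c * z := by rw [mul_add]
        _ = ι c * i + r * ι b := by rw [this]
      rw [key]
      exact I.add_mem (I.mul_mem_left _ hi) (I.mul_mem_left _ hbI)
    have hcmem : c ∈ Ideal.span {b} := by rw [← hbgen]; exact hcI
    obtain ⟨d, hd⟩ := Submodule.mem_span_singleton.mp hcmem
    -- b ∣ c, but deg b = deg c + 1 > deg c
    have hbdvdc : b ∣ c := Dvd.intro_left d (by simpa [smul_eq_mul] using hd)
    have hdeg : b.degree ≤ c.degree := Polynomial.degree_le_of_dvd hbdvdc hc0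
    have hdeg2 : b.degree = c.degree + 1 := by
      rw [hc, degree_mul, degree_X_add_C, add_comm]
    rw [hdeg2] at hdeg
    have := Polynomial.degree_eq_natDegree hc0
    rw [this] at hdeg
    norm_cast at hdeg
    omega
  · intro hne
    by_contra hroot
    -- (X + C α) does not divide b, so coprime
    have hndvd : ¬ (X + C α) ∣ b := by
      rw [hXC]
      intro h
      exact hroot ((dvd_iff_isRoot).mp h)
    have hirr : Irreducible (X + C α) := by
      rw [hXC]; exact irreducible_X_sub_C _
    have hcop : IsCoprime (X + C α) b := hirr.coprime_iff_not_dvd.mpr hndvd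
    obtain ⟨u, v, huv⟩ := hcop
    apply hne
    rw [Ideal.eq_top_iff_one]
    have h1 : (1 : R) = ι u * ι (X + C α) + ι v * ι b := by
      rw [← map_mul, ← map_mul, ← map_add, huv, map_one]
    rw [h1]
    exact Submodule.add_mem _
      (Ideal.mem_sup_right (Submodule.mem_span_singleton.mpr ⟨ι u, rfl⟩))
      (Ideal.mem_sup_left (I.mul_mem_left _ hbI))
end

section
/- Let α ∈ K, let I be a left ideal of R, and let b(s) ∈ K[s] be a nonzero polynomial generating I ∩ K[s]. If b(−α) = 0, then (I + R·(s+α)) ∩ K[s] is the principal ideal of K[s] generated by s+α. -/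
open Polynomial

/-- Let `K` be a field, `R` an associative unital `K`-algebra and
`ι : K[s] → R` a `K`-algebra homomorphism whose image lies in the center of `R`.
Let `α ∈ K`, let `I` be a left ideal of `R` and let `b(s) ≠ 0` generate `I ∩ K[s]`.
If `b(−α) = 0`, then `(I + R·(s+α)) ∩ K[s] = ⟨s+α⟩`. -/
theorem checkRoot_intersection_of_root
    {K : Type*} [Field K] {R : Type*} [Ring R] [Algebra K R]
    (ι : K[X] →ₐ[K] R) (hι : ∀ (p : K[X]) (r : R), ι p * r = r * ι p)
    (α : K) (I : Ideal R) (b : K[X]) (hb : b ≠ 0)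
    (hbgen : Ideal.comap ι I = Ideal.span {b})
    (hroot : b.eval (-α) = 0) :
    Ideal.comap ι (I ⊔ Ideal.span {ι (X + C α)}) =
      Ideal.span {X + C α} := by
  obtain ⟨b₁, hb₁⟩ : (X + C α) ∣ b := by
    have h : (X - C (-α)) ∣ b := Polynomial.dvd_iff_isRoot.mpr hroot
    simpa [sub_neg_eq_add] using h
  have hb₁ne : b₁ ≠ 0 := by rintro rfl; simp [hb₁] at hb
  have hbI : ι b ∈ I := by
    have : b ∈ Ideal.comap ι I := hbgen ▸ Ideal.mem_span_singleton_self b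
    exact this
  apply le_antisymm
  · intro p hp
    rw [Ideal.mem_comap] at hp
    rw [Ideal.mem_span_singleton,
      show X + C α = X - C (-α) by rw [map_neg, sub_neg_eq_add], Polynomial.dvd_iff_isRoot]
    by_contra hc
    set c := p.eval (-α) with hcdef
    obtain ⟨q, hq⟩ : (X + C α) ∣ (p - C c) := by
      have h : (X - C (-α)) ∣ (p - C c) :=
        Polynomial.dvd_iff_isRoot.mpr (by simp [Polynomial.IsRoot, hcdef])
      simpa [sub_neg_eq_add] using h
    have hp' : p = (X + C α) * q + C c := by linear_combination hq
    obtain ⟨i, hiI, z, hz, hiz⟩ := Submodule.mem_sup.mp hp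
    obtain ⟨r, hr⟩ := Submodule.mem_span_singleton.mp hz
    rw [smul_eq_mul] at hr
    rw [← hr] at hiz
    have hi : i = ι p - r * ι (X + C α) := eq_sub_of_add_eq hiz
    have key : ι (C c * b₁) ∈ I := by
      have h1 : ι b₁ * i = ι (b₁ * p) - r * ι b := by
        rw [hi, mul_sub, map_mul, ← mul_assoc, hι b₁ r, mul_assoc]
        congr 2
        rw [← map_mul, show b₁ * (X + C α) = b by rw [hb₁]; ring]
      have h2 : b₁ * p = q * b + C c * b₁ := by rw [hp', hb₁]; ring
      have e : ι (C c * b₁) = ι b₁ * i - ι q * ι b + r * ι b := by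
        rw [h1, h2]
        simp only [map_add, map_mul]
        abel
      rw [e]
      exact add_mem (sub_mem (Ideal.mul_mem_left I _ hiI)
        (Ideal.mul_mem_left I _ hbI)) (Ideal.mul_mem_left I _ hbI)
    have hmem : C c * b₁ ∈ Ideal.span {b} := by
      rw [← hbgen]; exact key
    have hdvd : b ∣ C c * b₁ := Ideal.mem_span_singleton.mp hmem
    have hne : C c * b₁ ≠ 0 := mul_ne_zero (by simpa using hc) hb₁ne
    have h1 : b.natDegree ≤ (C c * b₁).natDegree :=
      Polynomial.natDegree_le_of_dvd hdvd hne
    have h2 : (C c * b₁).natDegree = b₁.natDegree := by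
      rw [Polynomial.natDegree_C_mul (by simpa using hc)]
    have h3 : b.natDegree = b₁.natDegree + 1 := by
      rw [hb₁, Polynomial.natDegree_mul (Polynomial.X_add_C_ne_zero α) hb₁ne,
        Polynomial.natDegree_X_add_C]
      ring
    omega
  · rw [Ideal.span_le]
    intro x hx
    simp only [Set.mem_singleton_iff] at hx
    subst hx
    exact Ideal.mem_comap.mpr (le_sup_right (α := Ideal R)
      (Ideal.mem_span_singleton_self _))
end

section
/- Let α ∈ K, let I be a left ideal of R, let b(s) ∈ K[s] be a nonzero polynomial generating I ∩ K[s], and let m_α be the multiplicity of −α as a root of b. For every natural number i, one has m_α > i if and only if (I + R·(s+α)^{i+1}) ∩ K[s] is the principal ideal of K[s] generated by (s+α)^{i+1}. -/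
open Polynomial

/-- Let `K` be a field, `R` an associative unital `K`-algebra and
`ι : K[s] → R` a `K`-algebra homomorphism whose image lies in the center of `R`.
Let `α ∈ K`, let `I` be a left ideal of `R`, let `b(s) ≠ 0` generate `I ∩ K[s]`,
and let `m_α` be the multiplicity of `−α` as a root of `b`. For every `i ∈ ℕ`,
`m_α > i` if and only if `(I + R·(s+α)^{i+1}) ∩ K[s] = ⟨(s+α)^{i+1}⟩`. -/
theorem checkRoot_multiplicity_iff
    {K : Type*} [Field K] {R : Type*} [Ring R] [Algebra K R]
    (ι : K[X] →ₐ[K] R) (hι : ∀ (p : K[X]) (r : R), ι p * r = r * ι p)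
    (α : K) (I : Ideal R) (b : K[X]) (hb : b ≠ 0)
    (hbgen : Ideal.comap ι I = Ideal.span {b}) (i : ℕ) :
    i < b.rootMultiplicity (-α) ↔
      Ideal.comap ι (I ⊔ Ideal.span {ι ((X + C α) ^ (i + 1))}) =
        Ideal.span {(X + C α) ^ (i + 1)} := by
  set p : K[X] := (X + C α) ^ (i + 1) with hpdef
  -- multiplicity condition is divisibility
  have key : i < b.rootMultiplicity (-α) ↔ p ∣ b := by
    rw [Nat.lt_iff_add_one_le, Polynomial.le_rootMultiplicity_iff hb, map_neg,
      sub_neg_eq_add]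
  rw [key]
  have hbI : ι b ∈ I := by
    have : b ∈ Ideal.comap ι I := by
      rw [hbgen]; exact Ideal.mem_span_singleton_self b
    exact this
  have hbJ : b ∈ Ideal.comap ι (I ⊔ Ideal.span {ι p}) :=
    Ideal.mem_comap.mpr (Ideal.mem_sup_left hbI)
  have hpJ : p ∈ Ideal.comap ι (I ⊔ Ideal.span {ι p}) :=
    Ideal.mem_comap.mpr (Ideal.mem_sup_right (Ideal.mem_span_singleton_self _))
  constructor
  · rintro ⟨b₁, hb₁⟩
    have hb₁ne : b₁ ≠ 0 := by
      rintro rfl; rw [mul_zero] at hb₁; exact hb hb₁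
    apply le_antisymm
    · intro q hq
      rw [Ideal.mem_comap] at hq
      obtain ⟨x, hx, y, hy, hxy⟩ := Submodule.mem_sup.mp hq
      obtain ⟨r, hr⟩ := Submodule.mem_span_singleton.mp hy
      rw [smul_eq_mul] at hr
      have hmem : ι (q * b₁) ∈ I := by
        have heq : ι (q * b₁) = ι b₁ * x + r * ι b := by
          rw [map_mul, ← hxy, ← hr, add_mul, mul_assoc, ← map_mul,
            ← hb₁, hι b₁ x]
        rw [heq]
        exact I.add_mem (by simpa [smul_eq_mul] using I.smul_mem (ι b₁) hx)
          (by simpa [smul_eq_mul] using I.smul_mem r hbI)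
      have hqb : q * b₁ ∈ Ideal.span {b} := by
        rw [← hbgen]; exact hmem
      have hdvd : b ∣ q * b₁ := Ideal.mem_span_singleton.mp hqb
      rw [hb₁] at hdvd
      have : p ∣ q := (mul_dvd_mul_iff_right hb₁ne).mp hdvd
      exact Ideal.mem_span_singleton.mpr this
    · rw [Ideal.span_le, Set.singleton_subset_iff]
      exact hpJ
  · intro h
    rw [h] at hbJ
    exact Ideal.mem_span_singleton.mp hbJ
end

section
/- Let α ∈ K, let I be a left ideal of R with I ∩ K[s] ≠ 0, let i be a natural number, and set J_i = I + R·(s+α)^{i+1}. Then J_i ∩ K[s] is the principal ideal of K[s] generated by (s+α)^{i+1} if and only if (s+α)^i ∉ J_i (i.e. ι((s+α)^i) does not belong to J_i). -/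
open Polynomial

/-- Let `K` be a field, `R` an associative unital `K`-algebra and
`ι : K[s] → R` a `K`-algebra homomorphism whose image lies in the center of `R`.
Let `α ∈ K`, let `I` be a left ideal of `R` with `I ∩ K[s] ≠ 0`, let `i ∈ ℕ` and
set `J_i = I + R·(s+α)^{i+1}`. Then `J_i ∩ K[s] = ⟨(s+α)^{i+1}⟩` if and only if
`(s+α)^i ∉ J_i`. -/
theorem checkRoot_intersection_iff_not_mem
    {K : Type*} [Field K] {R : Type*} [Ring R] [Algebra K R]
    (ι : K[X] →ₐ[K] R) (hι : ∀ (p : K[X]) (r : R), ι p * r = r * ι p)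
    (α : K) (I : Ideal R) (hI : Ideal.comap ι I ≠ ⊥) (i : ℕ) :
    Ideal.comap ι (I ⊔ Ideal.span {ι ((X + C α) ^ (i + 1))}) =
        Ideal.span {(X + C α) ^ (i + 1)} ↔
      ι ((X + C α) ^ i) ∉ I ⊔ Ideal.span {ι ((X + C α) ^ (i + 1))} := by
  set p : K[X] := X + C α with hpdef
  set J : Ideal R := I ⊔ Ideal.span {ι (p ^ (i + 1))} with hJdef
  have hp : Prime p := by
    have h : p = X - C (-α) := by simp [hpdef, sub_neg_eq_add]
    rw [h]
    exact (Polynomial.irreducible_X_sub_C (-α)).prime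
  have hmem : p ^ (i + 1) ∈ Ideal.comap ι J := by
    simp only [Ideal.mem_comap]
    exact Ideal.mem_sup_right (Ideal.subset_span rfl)
  constructor
  · intro h hmem2
    have h2 : p ^ i ∈ Ideal.span {p ^ (i + 1)} := by
      rw [← h]; exact hmem2
    rw [Ideal.mem_span_singleton] at h2
    have := (pow_dvd_pow_iff hp.ne_zero hp.not_unit).mp h2
    omega
  · intro hni
    obtain ⟨g, hg⟩ := (IsPrincipalIdealRing.principal (Ideal.comap ι J)).principal
    have hdvd : g ∣ p ^ (i + 1) := by
      rw [hg, Ideal.submodule_span_eq, Ideal.mem_span_singleton] at hmem; exact hmem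
    obtain ⟨k, hk, hassoc⟩ := (dvd_prime_pow hp _).mp hdvd
    have hspan : Ideal.span {g} = Ideal.span {p ^ k} :=
      Ideal.span_singleton_eq_span_singleton.mpr hassoc
    have hk' : k = i + 1 := by
      by_contra hne
      have hki : k ≤ i := by omega
      have hmem3 : p ^ i ∈ Ideal.comap ι J := by
        rw [hg, Ideal.submodule_span_eq, hspan, Ideal.mem_span_singleton]
        exact pow_dvd_pow p hki
      exact hni hmem3
    rw [hg, Ideal.submodule_span_eq, hspan, hk']
end

section
/- Let α ∈ K, let I be a left ideal of R, let b(s) ∈ K[s] be a nonzero polynomial generating I ∩ K[s], and for each natural number i set J_i = I + R·(s+α)^{i+1}. If for some m ≥ 1 the chain R ⊋ J_0 ⊋ J_1 ⊋ ⋯ ⊋ J_{m−1} = J_m holds (each inclusion strict except the last equality), then the multiplicity of −α as a root of b equals m. -/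
open Polynomial

/-- Let `K` be a field, `R` an associative unital `K`-algebra and
`ι : K[s] → R` a `K`-algebra homomorphism whose image lies in the center of `R`.
Let `α ∈ K`, let `I` be a left ideal of `R`, let `b(s) ≠ 0` generate `I ∩ K[s]`,
and for each `i ∈ ℕ` set `J_i = I + R·(s+α)^{i+1}`. If for some `m ≥ 1` the chain
`R ⊋ J_0 ⊋ J_1 ⊋ ⋯ ⊋ J_{m−1} = J_m` holds, then the multiplicity of `−α` as a
root of `b` equals `m`. -/
theorem checkRoot_multiplicity_of_chain
    {K : Type*} [Field K] {R : Type*} [Ring R] [Algebra K R]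
    (ι : K[X] →ₐ[K] R) (hι : ∀ (p : K[X]) (r : R), ι p * r = r * ι p)
    (α : K) (I : Ideal R) (b : K[X]) (hb : b ≠ 0)
    (hbgen : Ideal.comap ι I = Ideal.span {b})
    (J : ℕ → Ideal R)
    (hJ : ∀ i : ℕ, J i = I ⊔ Ideal.span {ι ((X + C α) ^ (i + 1))})
    (m : ℕ) (hm : 1 ≤ m)
    (htop : J 0 ≠ ⊤)
    (hchain : ∀ i : ℕ, i + 1 < m → J (i + 1) < J i)
    (hstab : J (m - 1) = J m) :
    b.rootMultiplicity (-α) = m := by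
  classical
  set k := b.rootMultiplicity (-α) with hk
  set p : K[X] := X + C α with hp
  have hpX : X - C (-α) = p := by simp [hp, sub_neg_eq_add]
  have hp0 : p ≠ 0 := hpX ▸ X_sub_C_ne_zero (-α)
  set u : K[X] := b /ₘ (X - C (-α)) ^ k with hu_def
  have hbu : p ^ k * u = b := by
    rw [← hpX, hu_def, hk]; exact b.pow_mul_divByMonic_rootMultiplicity_eq (-α)
  have huev : u.eval (-α) ≠ 0 := by
    rw [hu_def, hk]; exact eval_divByMonic_pow_rootMultiplicity_ne_zero (-α) hb
  have hu : ¬ p ∣ u := by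
    rw [← hpX, dvd_iff_isRoot]; exact huev
  have hu0 : u ≠ 0 := by intro h; rw [h] at huev; exact huev (by simp)
  have hirr : Irreducible p := hpX ▸ irreducible_X_sub_C (-α)
  have hcop : IsCoprime p u := hirr.coprime_iff_not_dvd.mpr hu
  clear_value k p u
  clear hu_def
  -- b ∈ I (via ι)
  have hbI : ι b ∈ I := by
    have : b ∈ Ideal.comap ι I := by
      rw [hbgen]; exact Ideal.mem_span_singleton_self b
    exact this
  -- span membership helper
  have hspan : ∀ (r : R) (g : R), r * g ∈ Ideal.span {g} := by
    intro r g
    simpa [smul_eq_mul] using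
      Ideal.mul_mem_left _ r (Ideal.mem_span_singleton_self g)
  -- Step 1 : k ≥ m
  have hkm : m ≤ k := by
    by_contra hlt
    push_neg at hlt
    -- from coprimality, get c d with c*p + d*u = 1
    obtain ⟨c, d, hcd⟩ := hcop
    rcases Nat.eq_zero_or_pos k with hk0 | hkpos
    · -- k = 0 : J 0 = ⊤
      apply htop
      rw [Ideal.eq_top_iff_one, hJ 0]
      have hbu0 : u = b := by rw [← hbu, hk0, pow_zero, one_mul]
      have h1 : (1 : R) = ι c * ι (p ^ (0 + 1)) + ι d * ι b := by
        rw [← map_mul, ← map_mul, ← map_add, ← map_one ι, ← hbu0]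
        congr 1
        rw [← hcd]; ring
      rw [h1]
      exact Ideal.add_mem _
        (Ideal.mem_sup_right (hspan _ _))
        (Ideal.mem_sup_left (Ideal.mul_mem_left _ _ hbI))
    · -- k ≥ 1 : J k = J (k-1), contradicting strictness
      obtain ⟨j, rfl⟩ : ∃ j, k = j + 1 := ⟨k - 1, (Nat.succ_pred_eq_of_pos hkpos).symm⟩
      refine absurd ?_ (hchain j hlt).not_ge
      -- show J j ≤ J (j+1)
      rw [hJ j, hJ (j + 1)]
      apply sup_le (le_sup_left)
      rw [Ideal.span_le, Set.singleton_subset_iff]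
      -- ι (p^(j+1)) ∈ I ⊔ span {ι (p^(j+2))}
      have key : ι (p ^ (j + 1)) = ι d * ι b + ι c * ι (p ^ (j + 1 + 1)) := by
        rw [← map_mul, ← map_mul, ← map_add]
        congr 1
        rw [← hbu]
        calc p ^ (j + 1)
            = (c * p + d * u) * p ^ (j + 1) := by rw [hcd, one_mul]
          _ = d * (p ^ (j + 1) * u) + c * p ^ (j + 1 + 1) := by ring
      rw [key]
      exact Ideal.add_mem _
        (Ideal.mem_sup_left (Ideal.mul_mem_left _ _ hbI))
        (Ideal.mem_sup_right (hspan _ _))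
  -- Step 2 : k ≤ m
  -- from hstab, ι (p^m) ∈ I + R·ι (p^(m+1))
  have hm1 : m - 1 + 1 = m := Nat.sub_add_cancel hm
  have hbase : ∃ x ∈ I, ∃ r : R, ι (p ^ m) = x + r * ι (p ^ (m + 1)) := by
    have hmem : ι (p ^ m) ∈ J m := by
      rw [← hstab, hJ (m - 1), hm1]
      exact Ideal.mem_sup_right (Ideal.mem_span_singleton_self _)
    rw [hJ m] at hmem
    obtain ⟨x, hx, z, hz, hxz⟩ := Submodule.mem_sup.mp hmem
    obtain ⟨r, hr⟩ := Submodule.mem_span_singleton.mp hz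
    exact ⟨x, hx, r, by rw [← hxz, ← hr, smul_eq_mul]⟩
  -- iterate : for all N, ι (p^m) ∈ I + R·ι (p^(m+1+N))
  have hiter : ∀ N : ℕ, ∃ x ∈ I, ∃ r : R, ι (p ^ m) = x + r * ι (p ^ (m + 1 + N)) := by
    intro N
    induction N with
    | zero => exact hbase
    | succ N ih =>
        obtain ⟨x, hx, r, hr⟩ := hbase
        obtain ⟨x', hx', r', hr'⟩ := ih
        refine ⟨x' + r' * (ι (p ^ (N + 1)) * x), Ideal.add_mem _ hx'
          (Ideal.mul_mem_left _ _ (Ideal.mul_mem_left _ _ hx)), r' * r, ?_⟩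
        have hpow : ι (p ^ (m + 1 + N)) =
            ι (p ^ (N + 1)) * x + r * ι (p ^ (m + 1 + (N + 1))) := by
          have h1 : (p : K[X]) ^ (m + 1 + N) = p ^ (N + 1) * p ^ m := by
            rw [← pow_add]; ring_nf
          have h2 : (p : K[X]) ^ (m + 1 + (N + 1)) = p ^ (N + 1) * p ^ (m + 1) := by
            rw [← pow_add]; ring_nf
          rw [h1, h2, map_mul, hr, mul_add, map_mul]
          congr 1
          rw [← mul_assoc, hι (p ^ (N + 1)) r, mul_assoc]
        rw [hr', hpow, mul_add, ← add_assoc, ← mul_assoc, ← mul_assoc r' r]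
  -- take N = k, multiply on the right by ι u
  obtain ⟨x, hx, r, hr⟩ := hiter k
  have hmemI : ι (p ^ m * u) ∈ I := by
    have h1 : ι (p ^ m * u) = ι u * x + r * ι (p ^ (m + 1) * b) := by
      rw [map_mul, hr, add_mul, ← hι u x]
      congr 1
      rw [mul_assoc, ← map_mul]
      congr 2
      rw [← hbu]; ring
    rw [h1]
    refine Ideal.add_mem _ (Ideal.mul_mem_left _ _ hx) ?_
    rw [map_mul]
    exact Ideal.mul_mem_left _ _ (Ideal.mul_mem_left _ _ hbI)
  have hdvd : b ∣ p ^ m * u := by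
    have h2 : p ^ m * u ∈ Ideal.comap ι I := hmemI
    rw [hbgen, Ideal.mem_span_singleton] at h2
    exact h2
  rw [← hbu] at hdvd
  have hdvd' : p ^ k ∣ p ^ m := (mul_dvd_mul_iff_right hu0).mp hdvd
  have hkm' : k ≤ m := by
    have hnd := Polynomial.natDegree_le_of_dvd hdvd' (pow_ne_zero _ hp0)
    have hdeg : p.natDegree = 1 := by rw [← hpX]; exact natDegree_X_sub_C _
    simpa [natDegree_pow, hdeg] using hnd
  omega
end

section
/- Let α ∈ K, let I be a left ideal of R, let b(s) ∈ K[s] be a nonzero polynomial generating I ∩ K[s], and let m_α be the multiplicity of −α as a root of b. For every natural number i, one has m_α > i if and only if the left ideal (I : (s+α)^i) + R·(s+α) is a proper left ideal of R. -/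
open Polynomial

/-- The quotient of a left ideal `I` by a ring element `c`:
`I : c = { r ∈ R | r·c ∈ I }`. It is a left ideal of `R`. -/
def Ideal.leftColon {R : Type*} [Ring R] (I : Ideal R) (c : R) : Ideal R where
  carrier := {r : R | r * c ∈ I}
  zero_mem' := by simp
  add_mem' := fun {a b} ha hb => by simpa [add_mul] using I.add_mem ha hb
  smul_mem' := fun r x hx => by
    simpa [smul_eq_mul, mul_assoc] using I.mul_mem_left r hx

/-- Let `K` be a field, `R` an associative unital `K`-algebra and
`ι : K[s] → R` a `K`-algebra homomorphism whose image lies in the center of `R`.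
Let `α ∈ K`, let `I` be a left ideal of `R`, let `b(s) ≠ 0` generate `I ∩ K[s]`,
and let `m_α` be the multiplicity of `−α` as a root of `b`. For every `i ∈ ℕ`,
`m_α > i` if and only if `(I : (s+α)^i) + R·(s+α)` is a proper left ideal of `R`. -/
theorem checkRoot_multiplicity_iff_colon_proper
    {K : Type*} [Field K] {R : Type*} [Ring R] [Algebra K R]
    (ι : K[X] →ₐ[K] R) (hι : ∀ (p : K[X]) (r : R), ι p * r = r * ι p)
    (α : K) (I : Ideal R) (b : K[X]) (hb : b ≠ 0)
    (hbgen : Ideal.comap ι I = Ideal.span {b}) (i : ℕ) :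
    i < b.rootMultiplicity (-α) ↔
      (I.leftColon (ι ((X + C α) ^ i))) ⊔ Ideal.span {ι (X + C α)} ≠ ⊤ := by
  set p : K[X] := X + C α with hpdef
  have hp : p = X - C (-α) := by simp [hpdef, sub_neg_eq_add]
  set m : ℕ := b.rootMultiplicity (-α) with hmdef
  set q : K[X] := b /ₘ (X - C (-α)) ^ m with hqdef
  have hfact : p ^ m * q = b := by
    rw [hp]; exact pow_mul_divByMonic_rootMultiplicity_eq b (-α)
  have hqe : q.eval (-α) ≠ 0 := eval_divByMonic_pow_rootMultiplicity_ne_zero (-α) hb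
  have hq0 : q ≠ 0 := fun h => hqe (by simp [h])
  have hpndvd : ¬ p ∣ q := by
    rw [hp, dvd_iff_isRoot]; exact hqe
  have hp0 : p ≠ 0 := by rw [hp]; exact X_sub_C_ne_zero _
  have hpu : ¬ IsUnit p := by rw [hp]; exact not_isUnit_X_sub_C _
  have hmemI : ∀ f : K[X], ι f ∈ I ↔ b ∣ f := by
    intro f
    rw [← Ideal.mem_comap, hbgen, Ideal.mem_span_singleton]
  constructor
  · -- i < m → proper
    intro hi htop
    have h1 : (1 : R) ∈ (I.leftColon (ι (p ^ i))) ⊔ Ideal.span {ι p} := by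
      rw [htop]; trivial
    obtain ⟨x, hx, y, hy, hxy⟩ := Submodule.mem_sup.mp h1
    obtain ⟨r, hr⟩ := Submodule.mem_span_singleton.mp hy
    rw [smul_eq_mul] at hr
    have hxm : x * ι (p ^ i) ∈ I := hx
    have key : ι (q * p ^ (m - 1)) ∈ I := by
      have hsplit : q * p ^ (m - 1) = p ^ i * (q * p ^ (m - 1 - i)) := by
        have hadd : i + (m - 1 - i) = m - 1 := by omega
        conv_lhs => rw [← hadd, pow_add]
        ring
      have e1 : ι (q * p ^ (m - 1)) = x * ι (q * p ^ (m - 1)) + r * ι (p * (q * p ^ (m - 1))) := by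
        conv_lhs => rw [← one_mul (ι (q * p ^ (m - 1))), ← hxy, ← hr]
        rw [add_mul, mul_assoc, map_mul (f := ι) p]
      have t1 : x * ι (q * p ^ (m - 1)) ∈ I := by
        rw [hsplit, map_mul, ← mul_assoc]
        rw [← hι (q * p ^ (m - 1 - i)) (x * ι (p ^ i))]
        exact I.mul_mem_left _ hxm
      have t2 : r * ι (p * (q * p ^ (m - 1))) ∈ I := by
        apply I.mul_mem_left
        rw [hmemI, ← hfact]
        have hm1 : p * (q * p ^ (m - 1)) = p ^ m * q := by
          obtain ⟨k, hk⟩ : ∃ k, m = k + 1 := ⟨m - 1, by omega⟩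
          rw [hk, Nat.add_sub_cancel]; ring
        exact dvd_of_eq hm1.symm
      rw [e1]; exact I.add_mem t1 t2
    rw [hmemI] at key
    have hdvd : p ^ m * q ∣ p ^ (m - 1) * q := by
      rw [← hfact] at key
      rw [mul_comm q] at key
      exact key
    have : p ^ m ∣ p ^ (m - 1) := (mul_dvd_mul_iff_right hq0).mp hdvd
    have := (pow_dvd_pow_iff hp0 hpu).mp this
    omega
  · -- contrapositive: m ≤ i → top
    intro hproper
    by_contra hi
    push_neg at hi
    apply hproper
    have hcop : IsCoprime p q := by
      rw [hp]
      exact (irreducible_X_sub_C (-α)).coprime_iff_not_dvd.mpr (by rwa [← hp])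
    obtain ⟨u, v, huv⟩ := hcop
    rw [Ideal.eq_top_iff_one]
    have h1 : (1 : R) = ι v * ι q + ι u * ι p := by
      rw [← map_mul, ← map_mul, ← map_add, ← map_one ι]
      congr 1
      rw [← huv]; ring
    rw [h1]
    apply Submodule.add_mem
    · apply Submodule.mem_sup_left
      show (ι v * ι q) * ι (p ^ i) ∈ I
      rw [mul_assoc, ← map_mul, ← map_mul, hmemI]
      have hbd : b ∣ q * p ^ i := by
        rw [← hfact, mul_comm q]
        exact mul_dvd_mul (pow_dvd_pow p hi) dvd_rfl
      exact hbd.mul_left v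
    · apply Submodule.mem_sup_right
      exact Submodule.mem_span_singleton.mpr ⟨ι u, by rw [smul_eq_mul]⟩
end

section
/- Let R₁ ⊆ R₂ be an extension of associative unital rings and let S ⊆ R₁ be a multiplicatively closed set which is a left denominator set (satisfies the left Ore condition and left reversibility) both in R₁ and in R₂, so that the left Ore localizations S⁻¹R₁ and S⁻¹R₂ exist. Let j : S⁻¹R₁ → S⁻¹R₂ be the ring homomorphism induced by the inclusion. Then j is injective, and for every left ideal I of R₂ one has S⁻¹I ∩ S⁻¹R₁ = S⁻¹(I ∩ R₁); that is, the preimage under j of the extension of I to S⁻¹R₂ equals the extension of the left ideal I ∩ R₁ to S⁻¹R₁. -/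
/-- Characterization of the extension of a left ideal to a left Ore localization. -/
lemma span_image_mem_iff_aux {R₁ R₂ Q : Type*} [Ring R₁] [Ring R₂] [Ring Q]
    (i : R₁ →+* R₂) (S : Submonoid R₁)
    (hOre : ∀ (r : R₂) (s : S), ∃ (r' : R₂) (s' : S), i s' * r = r' * i s)
    (φ : R₂ →+* Q)
    (hunit : ∀ s : S, IsUnit (φ (i s)))
    (hfrac : ∀ x : Q, ∃ (r : R₂) (s : S), φ (i s) * x = φ r)
    (I : Ideal R₂) (x : Q) :
    x ∈ Ideal.span (φ '' (I : Set R₂)) ↔ ∃ r ∈ I, ∃ s : S, φ (i s) * x = φ r := by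
  constructor
  · intro hx
    induction hx using Submodule.span_induction with
    | mem y hy =>
      obtain ⟨r, hr, rfl⟩ := hy
      exact ⟨r, hr, 1, by simp⟩
    | zero => exact ⟨0, I.zero_mem, 1, by simp⟩
    | add y z _ _ hy hz =>
      obtain ⟨r, hr, s, hs⟩ := hy
      obtain ⟨u, hu, t, ht⟩ := hz
      obtain ⟨r', s', h⟩ := hOre (i t) s
      refine ⟨r' * r + i s' * u, I.add_mem (I.smul_mem r' hr) (I.smul_mem (i s') hu),
        s' * t, ?_⟩
      have hc : i ((s' * t : S) : R₁) = i s' * i t := by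
        rw [Submonoid.coe_mul, map_mul]
      have h1 : φ (i ((s' * t : S) : R₁)) * y = φ (r' * r) := by
        rw [hc, h, map_mul, mul_assoc, hs, ← map_mul]
      have h2 : φ (i ((s' * t : S) : R₁)) * z = φ (i s' * u) := by
        rw [hc, map_mul, mul_assoc, ht, ← map_mul]
      rw [mul_add, h1, h2, map_add]
    | smul q y _ hy =>
      obtain ⟨r, hr, s, hs⟩ := hy
      obtain ⟨a, t, ht⟩ := hfrac q
      obtain ⟨r', s', h⟩ := hOre a s
      refine ⟨r' * r, I.smul_mem r' hr, s' * t, ?_⟩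
      have hc : i ((s' * t : S) : R₁) = i s' * i t := by
        rw [Submonoid.coe_mul, map_mul]
      rw [smul_eq_mul, hc, map_mul, mul_assoc, ← mul_assoc (φ (i t)) q y, ht,
        ← mul_assoc, ← map_mul, h, map_mul, mul_assoc, hs, ← map_mul]
  · rintro ⟨r, hr, s, hs⟩
    have hu := hunit s
    have : x = ↑hu.unit⁻¹ * φ r := by
      rw [← hs, ← mul_assoc, IsUnit.val_inv_mul, one_mul]
    rw [this]
    exact Ideal.mul_mem_left _ _ (Ideal.subset_span ⟨r, hr, rfl⟩)


/-- Let `R₁ ⊆ R₂` be an extension of associative unital rings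
(given by an injective ring homomorphism `i : R₁ → R₂`) and let `S ⊆ R₁` be a
multiplicatively closed set which is a left denominator set (left Ore condition
and left reversibility) both in `R₁` and in `R₂`. Let `φ₁ : R₁ → Q₁` and
`φ₂ : R₂ → Q₂` be left rings of fractions with respect to `S` (resp. `i(S)`),
i.e. `φₗ` maps `S` to units, every element of `Qₗ` has the form `φ(s)⁻¹·φ(r)`
(equivalently `φ(s)·q = φ(r)`), and `ker φₗ = {r ∣ s·r = 0 for some s ∈ S}`.
Let `j : Q₁ → Q₂` = `S⁻¹R₁ → S⁻¹R₂` be the ring homomorphism induced by `i`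
(i.e. `j ∘ φ₁ = φ₂ ∘ i`). Then `j` is injective, and for every left ideal `I`
of `R₂` one has `S⁻¹I ∩ S⁻¹R₁ = S⁻¹(I ∩ R₁)`: the preimage under `j` of the
left ideal of `Q₂` generated by `φ₂(I)` equals the left ideal of `Q₁` generated
by `φ₁(I ∩ R₁)`. -/
theorem oreLocalization_injective_and_comap_extension
    {R₁ R₂ Q₁ Q₂ : Type*} [Ring R₁] [Ring R₂] [Ring Q₁] [Ring Q₂]
    (i : R₁ →+* R₂) (hi : Function.Injective i)
    (S : Submonoid R₁)
    -- `S` is a left denominator set in `R₁`: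
    (hOre₁ : ∀ (r : R₁) (s : S), ∃ (r' : R₁) (s' : S), (s' : R₁) * r = r' * s)
    (hRev₁ : ∀ (r : R₁) (s : S), r * s = 0 → ∃ s' : S, (s' : R₁) * r = 0)
    -- the image of `S` is a left denominator set in `R₂`:
    (hOre₂ : ∀ (r : R₂) (s : S), ∃ (r' : R₂) (s' : S), i s' * r = r' * i s)
    (hRev₂ : ∀ (r : R₂) (s : S), r * i s = 0 → ∃ s' : S, i s' * r = 0)
    -- `φ₁ : R₁ → Q₁` is a left ring of fractions for `R₁` w.r.t. `S`:
    (φ₁ : R₁ →+* Q₁)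
    (hunit₁ : ∀ s : S, IsUnit (φ₁ s))
    (hfrac₁ : ∀ x : Q₁, ∃ (r : R₁) (s : S), φ₁ s * x = φ₁ r)
    (hker₁ : ∀ r : R₁, φ₁ r = 0 ↔ ∃ s : S, (s : R₁) * r = 0)
    -- `φ₂ : R₂ → Q₂` is a left ring of fractions for `R₂` w.r.t. `i(S)`:
    (φ₂ : R₂ →+* Q₂)
    (hunit₂ : ∀ s : S, IsUnit (φ₂ (i s)))
    (hfrac₂ : ∀ x : Q₂, ∃ (r : R₂) (s : S), φ₂ (i s) * x = φ₂ r)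
    (hker₂ : ∀ r : R₂, φ₂ r = 0 ↔ ∃ s : S, i s * r = 0)
    -- `j : S⁻¹R₁ → S⁻¹R₂` is induced by the inclusion `i`:
    (j : Q₁ →+* Q₂) (hj : j.comp φ₁ = φ₂.comp i) :
    Function.Injective j ∧
      ∀ I : Ideal R₂,
        Ideal.comap j (Ideal.span (φ₂ '' (I : Set R₂))) =
          Ideal.span (φ₁ '' ((Ideal.comap i I : Ideal R₁) : Set R₁)) := by
  have hj' : ∀ r : R₁, j (φ₁ r) = φ₂ (i r) := fun r => RingHom.congr_fun hj r
  -- characterization lemma for Q₁, via i := id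
  have char₁ := span_image_mem_iff_aux (RingHom.id R₁) S
    (fun r s => hOre₁ r s) φ₁ (fun s => hunit₁ s) (fun x => hfrac₁ x)
  simp only [RingHom.id_apply] at char₁
  have char₂ := span_image_mem_iff_aux i S hOre₂ φ₂ hunit₂ hfrac₂
  constructor
  · rw [injective_iff_map_eq_zero]
    intro x hx
    obtain ⟨a, t, ht⟩ := hfrac₁ x
    have h2 : φ₂ (i a) = 0 := by
      rw [← hj' a, ← ht, map_mul, hx, mul_zero]
    obtain ⟨s', hs'⟩ := (hker₂ (i a)).mp h2
    have : i ((s' : R₁) * a) = 0 := by rw [map_mul]; exact hs'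
    have ha : φ₁ a = 0 := (hker₁ a).mpr ⟨s', hi (by rw [this, map_zero])⟩
    have := hunit₁ t
    have hx0 : φ₁ ↑t * x = 0 := by rw [ht, ha]
    exact (this.mul_right_eq_zero).mp hx0
  · intro I
    ext x
    rw [Ideal.mem_comap, char₂ I (j x), char₁ (Ideal.comap i I) x]
    constructor
    · rintro ⟨r, hr, s, hs⟩
      obtain ⟨a, t, ht⟩ := hfrac₁ x
      have ht2 : φ₂ (i t) * j x = φ₂ (i a) := by
        rw [← hj' t, ← hj' a, ← ht, map_mul]
      obtain ⟨r', s', h⟩ := hOre₂ (i t) s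
      have key : φ₂ (i ((s' : R₁) * a)) = φ₂ (r' * r) := by
        rw [map_mul i, map_mul φ₂, ← ht2, ← mul_assoc, ← map_mul φ₂, h, map_mul φ₂,
          mul_assoc, hs, ← map_mul]
      have : φ₂ (i ((s' : R₁) * a) - r' * r) = 0 := by rw [map_sub, key, sub_self]
      obtain ⟨s'', hs''⟩ := (hker₂ _).mp this
      have hmem : i ((s'' : R₁) * ((s' : R₁) * a)) ∈ I := by
        have h0 : i ↑s'' * i ((s' : R₁) * a) - i ↑s'' * (r' * r) = 0 := by
          rw [← mul_sub]; exact hs''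
        have : i ↑s'' * i ((s' : R₁) * a) = i ↑s'' * (r' * r) := sub_eq_zero.mp h0
        rw [map_mul, this, ← mul_assoc]
        exact I.smul_mem _ hr
      refine ⟨(s'' : R₁) * ((s' : R₁) * a), hmem, s'' * s' * t, ?_⟩
      have hc : ((s'' * s' * t : S) : R₁) = (s'' : R₁) * (s' : R₁) * (t : R₁) := by
        rw [Submonoid.coe_mul, Submonoid.coe_mul]
      rw [hc, map_mul φ₁, map_mul φ₁, mul_assoc, ht, mul_assoc, ← map_mul, ← map_mul]
    · rintro ⟨b, hb, u, hu⟩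
      refine ⟨i b, hb, u, ?_⟩
      rw [← hj' u, ← hj' b, ← map_mul, hu]
end

section
/- Let A be a ℤ-graded associative unital K-algebra with degree-zero component A₀, let s ∈ A₀ be an element commuting with every element of A₀, and let φ : K[X] → A be the K-algebra homomorphism with φ(X) = s. Let I be a homogeneous (graded) left ideal of A with φ⁻¹(I) ≠ 0, and let q ∈ K[X]. Then φ⁻¹(I + A·φ(q)) = φ⁻¹(I) + K[X]·q, i.e. the preimage under φ of the left ideal generated by I and φ(q) equals the ideal of K[X] generated by φ⁻¹(I) and q. -/
open Polynomial

/-!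
Write `φ = aeval s`, `J = φ⁻¹(I)` and let `p ∈ φ⁻¹(I + A·φ(q))`. Since `φ(p)`, `φ(q)` lie in
`A₀` and `I` is homogeneous, taking degree-zero components gives `φ(p) = i + a·φ(q)` with
`i ∈ I` and `a ∈ A₀`. As `φ(K[X])` commutes with `A₀`, every `r` with `r·q ∈ J` satisfies
`φ(r·p) = φ(r)·i + a·φ(r·q) ∈ I`, so `r·p ∈ J`. In the PID `K[X]` this forces `p ∈ J + (q)`
once `J ≠ 0`: writing `J = (g)`, `J + (q) = (d)` and `g = d·g'`, the element `r = g'` gives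
`g ∣ g'·p`, i.e. `d ∣ p`.
-/

theorem Polynomial.aeval_mem_of_mem {R A : Type*} [CommSemiring R] [Semiring A] [Algebra R A]
    {S : Subalgebra R A} {s : A} (hs : s ∈ S) (p : R[X]) : aeval s p ∈ S :=
  Algebra.adjoin_le (Set.singleton_subset_iff.2 hs) (aeval_mem_adjoin_singleton R s)

theorem Ideal.IsHomogeneous.exists_eq_add_mul_of_mem_sup_span_singleton
    {ι σ A : Type*} [Semiring A] [SetLike σ A] [AddSubmonoidClass σ A] [DecidableEq ι]
    [AddMonoid ι] {𝒜 : ι → σ} [GradedRing 𝒜] {I : Ideal A} (hI : I.IsHomogeneous 𝒜)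
    {x y : A} (hx : x ∈ 𝒜 0) (hy : y ∈ 𝒜 0) (hxy : x ∈ I ⊔ Ideal.span {y}) :
    ∃ i ∈ I, ∃ a ∈ 𝒜 0, x = i + a * y := by
  obtain ⟨i, hi, z, hz, rfl⟩ := Submodule.mem_sup.1 hxy
  obtain ⟨a, rfl⟩ := Ideal.mem_span_singleton'.1 hz
  refine ⟨_, hI 0 hi, _, SetLike.coe_mem (DirectSum.decompose 𝒜 a 0), ?_⟩
  rw [← DirectSum.decompose_of_mem_same 𝒜 hx, DirectSum.decompose_add, DirectSum.add_apply,
    AddMemClass.coe_add, DirectSum.coe_decompose_mul_of_right_mem_zero 𝒜 hy]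

theorem Ideal.mem_sup_span_singleton_of_forall_mul_mem {R : Type*} [CommRing R] [IsDomain R]
    [IsPrincipalIdealRing R] {J : Ideal R} (hJ : J ≠ ⊥) {p q : R}
    (h : ∀ r, r * q ∈ J → r * p ∈ J) : p ∈ J ⊔ Ideal.span {q} := by
  obtain ⟨g, rfl⟩ : ∃ g, J = Ideal.span {g} :=
    ⟨Submodule.IsPrincipal.generator J, (Ideal.span_singleton_generator J).symm⟩
  obtain ⟨d, hd⟩ : ∃ d, Ideal.span {g} ⊔ Ideal.span {q} = Ideal.span {d} :=
    ⟨Submodule.IsPrincipal.generator _, (Ideal.span_singleton_generator _).symm⟩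
  have hg : g ≠ 0 := fun h0 => hJ (by rw [h0, Ideal.span_singleton_eq_bot])
  obtain ⟨g', rfl⟩ : d ∣ g := Ideal.mem_span_singleton.1 (hd ▸ Ideal.mem_sup_left
    (Ideal.mem_span_singleton_self g))
  obtain ⟨q', rfl⟩ : d ∣ q := Ideal.mem_span_singleton.1 (hd ▸ Ideal.mem_sup_right
    (Ideal.mem_span_singleton_self q))
  have hg'q : g' * (d * q') ∈ Ideal.span {d * g'} :=
    Ideal.mem_span_singleton.2 ⟨q', by ring⟩
  have hg'p : d * g' ∣ g' * p := Ideal.mem_span_singleton.1 (h g' hg'q)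
  rw [mul_comm d g'] at hg'p
  rw [hd, Ideal.mem_span_singleton]
  exact (mul_dvd_mul_iff_left (right_ne_zero_of_mul hg)).1 hg'p

/-- Let `A` be a `ℤ`-graded associative unital `K`-algebra with
degree-zero component `A₀ = 𝒜 0`, let `s ∈ A₀` commute with every element of
`A₀`, and let `φ : K[X] → A` be the `K`-algebra homomorphism with `φ(X) = s`
(i.e. `φ = aeval s`). Let `I` be a homogeneous left ideal of `A` with
`φ⁻¹(I) ≠ 0` and let `q ∈ K[X]`. Then
`φ⁻¹(I + A·φ(q)) = φ⁻¹(I) + K[X]·q`. -/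
theorem graded_checkRoot_sum_intersection
    {K A : Type*} [Field K] [Ring A] [Algebra K A]
    (𝒜 : ℤ → Submodule K A) [GradedRing 𝒜]
    (s : A) (hs : s ∈ 𝒜 0) (hcomm : ∀ a ∈ 𝒜 0, s * a = a * s)
    (I : Ideal A) (hIhom : Ideal.IsHomogeneous 𝒜 I)
    (hI : Ideal.comap ((Polynomial.aeval s : K[X] →ₐ[K] A)) I ≠ ⊥)
    (q : K[X]) :
    Ideal.comap ((Polynomial.aeval s : K[X] →ₐ[K] A)) (I ⊔ Ideal.span {(Polynomial.aeval s : K[X] →ₐ[K] A) q}) =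
      Ideal.comap ((Polynomial.aeval s : K[X] →ₐ[K] A)) I ⊔ Ideal.span {q} := by
  have hs₀ : s ∈ SetLike.GradeZero.subalgebra 𝒜 := hs
  refine le_antisymm (fun p hp => Ideal.mem_sup_span_singleton_of_forall_mul_mem hI ?_) ?_
  · intro r hrq
    obtain ⟨i, hi, a, ha, hp⟩ := hIhom.exists_eq_add_mul_of_mem_sup_span_singleton
      (aeval_mem_of_mem hs₀ p) (aeval_mem_of_mem hs₀ q) hp
    have hs_a : s ∈ Subalgebra.centralizer K {a} := by
      simpa [Subalgebra.mem_centralizer_iff] using (hcomm a ha).symm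
    have hr_a : aeval s r * a = a * aeval s r :=
      (Subalgebra.mem_centralizer_iff K).1 (aeval_mem_of_mem hs_a r) a rfl |>.symm
    change aeval s (r * p) ∈ I
    rw [map_mul, hp, mul_add, ← mul_assoc, hr_a, mul_assoc, ← map_mul]
    exact I.add_mem (I.mul_mem_left _ hi) (I.mul_mem_left _ hrq)
  · refine sup_le (Ideal.comap_mono le_sup_left) ?_
    rw [Ideal.span_singleton_le_iff_mem, Ideal.mem_comap]
    exact Ideal.mem_sup_right (Ideal.mem_span_singleton_self _)
end
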